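/- Let c and d be monotonic cost functions. A Δ⁰₂ set A obeys both c and d if and only if A obeys the cost function c + d. -/

import Mathlib

/-- A cost function: computable and nonnegative. -/
def IsCostFunction (c : ℕ → ℕ → ℚ) : Prop :=
  Computable₂ c ∧ ∀ x s, 0 ≤ c x s

/-- The cost of the change from stage `s-1` to stage `s`: `c x s` for the least
`x < s` that changes, and `0` if there is no such `x`. -/
def stageCost (c : ℕ → ℕ → ℚ) (A : ℕ → ℕ → Bool) (s : ℕ) : ℚ :=
  if h : ∃ x, x < s ∧ A (s - 1) x ≠ A s x then c (Nat.find h) s else 0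

/-- `A` is a computable approximation of the set `L`: a computable sequence of
finite sets converging pointwise to `L`. -/
def IsCompApprox (A : ℕ → ℕ → Bool) (L : ℕ → Bool) : Prop :=
  Computable₂ A ∧ (∀ s, Set.Finite {x | A s x = true}) ∧
    ∀ x, ∃ N, ∀ s, N ≤ s → A s x = L x

/-- The total cost of the approximation `A` is bounded by `q`. -/
def ObeysWith (c : ℕ → ℕ → ℚ) (A : ℕ → ℕ → Bool) (q : ℚ) : Prop :=
  ∀ n, ∑ s ∈ Finset.range n, stageCost c A s ≤ q

/-- A (Δ⁰₂) set `L` obeys the cost function `c`. -/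
def Obeys (c : ℕ → ℕ → ℚ) (L : ℕ → Bool) : Prop :=
  ∃ A, IsCompApprox A L ∧ ∃ q, ObeysWith c A q

/-- Monotonic: non-increasing in the main argument, zero for `x > s`,
non-decreasing in the stage. -/
def MonotonicCF (c : ℕ → ℕ → ℚ) : Prop :=
  (∀ x s, c (x + 1) s ≤ c x s) ∧ (∀ x s, s < x → c x s = 0) ∧
    ∀ x s, c x s ≤ c x (s + 1)

/-- The limit condition: `lim_x liminf_s c(x,s) = 0`. -/
def LimitCondition (c : ℕ → ℕ → ℚ) : Prop :=
  ∀ e : ℕ, ∃ x0, ∀ x, x0 ≤ x → ∀ t, ∃ s, t ≤ s ∧ c x s ≤ ((2 : ℚ) ^ e)⁻¹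

/-- `L` is computably enumerable. -/
def CEset (L : ℕ → Bool) : Prop :=
  ∃ f : ℕ →. Unit, Partrec f ∧ ∀ x, (f x).Dom ↔ L x = true

/-!
Given approximations of `A` with finite `c`-cost and finite `d`-cost, compute an increasing
sequence of stages `s i` at which the two approximations agree on all `x ≤ i`, and sample both
at these stages. For a monotonic cost function, sampling at increasing stages does not increase
the total cost: a change at `x ≤ i` between samples `i` and `i + 1` comes from a change of the
original approximation at some stage `t > s i ≥ i`, which already costs at least `c x (i + 1)`.
The two sampled approximations have the same stage costs, so either one has `(c + d)`-cost at
most the sum of the two costs. The converse holds because `c, d ≤ c + d`.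
-/
open Filter Finset

theorem Computable₂.decide_forall_lt {α : Type*} [Primcodable α] {p : α → ℕ → Bool}
    (hp : Computable₂ p) : Computable₂ fun a n => decide (∀ x < n, p a x = true) := by
  have step : Computable₂ fun (a : α × ℕ) (z : ℕ × Bool) => z.2 && p a.1 z.1 :=
    Primrec.and.to_comp.comp (Computable.snd.comp Computable.snd)
      (hp.comp (Computable.fst.comp Computable.fst) (Computable.fst.comp Computable.snd))
  refine (Computable.nat_rec Computable.snd (Computable.const true) step).of_eq fun a => ?_
  induction a.2 with
  | zero => simp
  | succ n ih => simp only [Nat.forall_lt_succ_right, Bool.decide_and, Bool.decide_eq_true, ← ih]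

theorem exists_computable_strictMono_of_eventually {R : ℕ → ℕ → Prop}
    (hR : ComputablePred fun p : ℕ × ℕ => R p.1 p.2) (hev : ∀ i, ∀ᶠ t in atTop, R i t) :
    ∃ s : ℕ → ℕ, Computable s ∧ StrictMono s ∧ ∀ i, R i (s i) := by
  classical
  obtain ⟨_, hRdec⟩ := hR
  let Q : ℕ × ℕ → ℕ → Prop := fun a t => a.1 < t ∧ R a.2 t
  have hQ : ∀ a, ∃ t, Q a t := fun a => ((eventually_gt_atTop a.1).and (hev a.2)).exists
  have hQdec : ComputablePred fun p : (ℕ × ℕ) × ℕ => Q p.1 p.2 := by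
    refine Computable.computablePred ((Primrec.and.to_comp.comp
      (Primrec.nat_lt.decide.to_comp.comp (Computable.fst.comp Computable.fst) Computable.snd)
      (hRdec.comp ((Computable.snd.comp Computable.fst).pair Computable.snd))).of_eq fun p => ?_)
    simp only [Q, Bool.decide_and]
    congr
  let nextStage : ℕ × ℕ → ℕ := fun a => Nat.find (hQ a)
  have hnextStage_spec : ∀ a, Q a (nextStage a) := fun a => Nat.find_spec (hQ a)
  have hnext : Computable nextStage := Computable.find hQdec hQ
  let s : ℕ → ℕ := fun n =>
    Nat.rec (motive := fun _ => ℕ) (nextStage (0, 0)) (fun i m => nextStage (m, i + 1)) n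
  have hs : Computable s :=
    (Computable.nat_rec Computable.id (Computable.const _) (hnext.comp
      ((Computable.snd.comp Computable.snd).pair
        (Computable.succ.comp (Computable.fst.comp Computable.snd)))).to₂).of_eq fun _ => rfl
  have hstep : ∀ i, s i < s (i + 1) := fun i => (hnextStage_spec (s i, i + 1)).1
  refine ⟨s, hs, strictMono_nat_of_lt_succ hstep, ?_⟩
  rintro (_ | i)
  · exact (hnextStage_spec (0, 0)).2
  · exact (hnextStage_spec (s i, i + 1)).2

theorem MonotonicCF.antitone_left {c : ℕ → ℕ → ℚ} (hc : MonotonicCF c) (s : ℕ) :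
    Antitone (c · s) :=
  antitone_nat_of_succ_le fun x => hc.1 x s

theorem MonotonicCF.monotone_right {c : ℕ → ℕ → ℚ} (hc : MonotonicCF c) (x : ℕ) :
    Monotone (c x) :=
  monotone_nat_of_le_succ fun s => hc.2.2 x s

section stageCost

variable {c d : ℕ → ℕ → ℚ} {A B : ℕ → ℕ → Bool}

theorem stageCost_zero : stageCost c A 0 = 0 :=
  dif_neg fun ⟨_, hx, _⟩ => Nat.not_lt_zero _ hx

theorem stageCost_nonneg (hc : ∀ x s, 0 ≤ c x s) (t : ℕ) : 0 ≤ stageCost c A t := by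
  unfold stageCost
  split
  · exact hc _ _
  · exact le_rfl

theorem stageCost_mono (hcd : ∀ x s, c x s ≤ d x s) (t : ℕ) :
    stageCost c A t ≤ stageCost d A t := by
  unfold stageCost
  split
  · exact hcd _ _
  · exact le_rfl

theorem stageCost_add (t : ℕ) :
    stageCost (fun x s => c x s + d x s) A t = stageCost c A t + stageCost d A t := by
  unfold stageCost
  split <;> simp

theorem stageCost_congr (hAB : ∀ u x, x ≤ u → A u x = B u x) (t : ℕ) :
    stageCost c A t = stageCost c B t := by
  have hiff : ∀ x, (x < t ∧ A (t - 1) x ≠ A t x) ↔ (x < t ∧ B (t - 1) x ≠ B t x) := by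
    refine fun x => and_congr_right fun hx => ?_
    rw [hAB (t - 1) x (by omega), hAB t x hx.le]
  unfold stageCost
  simp_rw [hiff]

theorem le_stageCost_of_ne (hc : MonotonicCF c) {x t : ℕ} (hx : x < t)
    (hne : A (t - 1) x ≠ A t x) : c x t ≤ stageCost c A t := by
  rw [stageCost, dif_pos ⟨x, hx, hne⟩]
  exact hc.antitone_left t (Nat.find_min' _ ⟨hx, hne⟩)

theorem exists_mem_Ioc_ne_of_ne {x u v : ℕ} (huv : u ≤ v) (hne : A u x ≠ A v x) :
    ∃ t ∈ Ioc u v, A (t - 1) x ≠ A t x := by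
  induction v, huv using Nat.le_induction with
  | base => exact absurd rfl hne
  | succ v huv ih =>
    by_cases hv : A u x = A v x
    · exact ⟨v + 1, mem_Ioc.2 ⟨by omega, le_rfl⟩, by simpa [← hv] using hne⟩
    · obtain ⟨t, ht, htne⟩ := ih hv
      exact ⟨t, Ioc_subset_Ioc_right v.le_succ ht, htne⟩

theorem le_sum_stageCost_of_ne (hc : MonotonicCF c) (hc0 : ∀ x s, 0 ≤ c x s) {x j u v : ℕ}
    (hxu : x ≤ u) (hju : j ≤ u + 1) (huv : u ≤ v) (hne : A u x ≠ A v x) :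
    c x j ≤ ∑ t ∈ Ioc u v, stageCost c A t := by
  obtain ⟨t, ht, htne⟩ := exists_mem_Ioc_ne_of_ne huv hne
  have hut := (mem_Ioc.1 ht).1
  calc c x j ≤ c x t := hc.monotone_right x (by omega)
    _ ≤ stageCost c A t := le_stageCost_of_ne hc (by omega) htne
    _ ≤ ∑ t ∈ Ioc u v, stageCost c A t :=
      single_le_sum (fun t _ => stageCost_nonneg hc0 t) ht

theorem stageCost_comp_succ_le (hc : MonotonicCF c) (hc0 : ∀ x s, 0 ≤ c x s) {s : ℕ → ℕ}
    (hs : StrictMono s) (i : ℕ) :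
    stageCost c (fun i => A (s i)) (i + 1) ≤ ∑ t ∈ Ioc (s i) (s (i + 1)), stageCost c A t := by
  rw [stageCost]
  split
  · next h =>
    obtain ⟨hx, hne⟩ := Nat.find_spec h
    have hi : i ≤ s i := hs.id_le i
    exact le_sum_stageCost_of_ne hc hc0 (by omega) (by omega) (hs.monotone i.le_succ) hne
  · exact sum_nonneg fun t _ => stageCost_nonneg hc0 t

end stageCost

theorem sum_range_sum_Ioc_of_monotone {M : Type*} [AddCommMonoid M] {s : ℕ → ℕ}
    (hs : Monotone s) (f : ℕ → M) (n : ℕ) :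
    ∑ i ∈ range n, ∑ t ∈ Ioc (s i) (s (i + 1)), f t = ∑ t ∈ Ioc (s 0) (s n), f t := by
  induction n with
  | zero => simp
  | succ n ih =>
    rw [sum_range_succ, ih, sum_Ioc_consecutive _ (hs n.zero_le) (hs n.le_succ)]

namespace ObeysWith

variable {c d : ℕ → ℕ → ℚ} {A B : ℕ → ℕ → Bool} {q r : ℚ}

theorem nonneg (h : ObeysWith c A q) : 0 ≤ q := by
  simpa using h 0

theorem mono (hcd : ∀ x s, c x s ≤ d x s) (h : ObeysWith d A q) : ObeysWith c A q :=
  fun n => (sum_le_sum fun t _ => stageCost_mono hcd t).trans (h n)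

theorem add (hc : ObeysWith c A q) (hd : ObeysWith d A r) :
    ObeysWith (fun x s => c x s + d x s) A (q + r) := fun n => by
  simpa only [stageCost_add, sum_add_distrib] using add_le_add (hc n) (hd n)

theorem congr (hAB : ∀ u x, x ≤ u → A u x = B u x) (h : ObeysWith c A q) :
    ObeysWith c B q := fun n => by
  simpa only [stageCost_congr hAB] using h n

theorem comp_strictMono (hc : MonotonicCF c) (hc0 : ∀ x s, 0 ≤ c x s) {s : ℕ → ℕ}
    (hs : StrictMono s) (h : ObeysWith c A q) : ObeysWith c (fun i => A (s i)) q := by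
  rintro (_ | n)
  · simpa using h.nonneg
  calc ∑ i ∈ range (n + 1), stageCost c (fun i => A (s i)) i
      = ∑ i ∈ range n, stageCost c (fun i => A (s i)) (i + 1) := by
        rw [sum_range_succ', stageCost_zero, add_zero]
    _ ≤ ∑ i ∈ range n, ∑ t ∈ Ioc (s i) (s (i + 1)), stageCost c A t :=
        sum_le_sum fun i _ => stageCost_comp_succ_le hc hc0 hs i
    _ = ∑ t ∈ Ioc (s 0) (s n), stageCost c A t := sum_range_sum_Ioc_of_monotone hs.monotone _ n
    _ ≤ ∑ t ∈ range (s n + 1), stageCost c A t :=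
        sum_le_sum_of_subset_of_nonneg
          (fun t ht => mem_range.2 (Nat.lt_succ_of_le (mem_Ioc.1 ht).2))
          fun t _ _ => stageCost_nonneg hc0 t
    _ ≤ q := h _

end ObeysWith

namespace IsCompApprox

variable {A B : ℕ → ℕ → Bool} {L : ℕ → Bool}

theorem eventually_eq (hA : IsCompApprox A L) (x : ℕ) : ∀ᶠ s in atTop, A s x = L x :=
  eventually_atTop.2 (hA.2.2 x)

theorem comp_strictMono (hA : IsCompApprox A L) {s : ℕ → ℕ} (hs : Computable s)
    (hs_mono : StrictMono s) : IsCompApprox (fun i => A (s i)) L := by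
  refine ⟨hA.1.comp (hs.comp Computable.fst) Computable.snd, fun i => hA.2.1 (s i), fun x => ?_⟩
  obtain ⟨N, hN⟩ := hA.2.2 x
  exact ⟨N, fun i hi => hN _ (hi.trans (hs_mono.id_le i))⟩

theorem exists_computable_strictMono_agree (hA : IsCompApprox A L) (hB : IsCompApprox B L) :
    ∃ s : ℕ → ℕ, Computable s ∧ StrictMono s ∧ ∀ i, ∀ x ≤ i, A (s i) x = B (s i) x := by
  refine exists_computable_strictMono_of_eventually (R := fun i t => ∀ x ≤ i, A t x = B t x)
    ?_ fun i => ?_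
  · have hbeq : Computable₂ fun t x => A t x == B t x :=
      Primrec.beq.to_comp.comp₂ hA.1 hB.1
    refine Computable.computablePred
      (((Computable₂.decide_forall_lt hbeq).comp Computable.snd
        (Computable.succ.comp Computable.fst)).of_eq fun p => ?_)
    simp
  · have hboth := (Set.finite_Iic i).eventually_all.2 fun x _ =>
      (hA.eventually_eq x).and (hB.eventually_eq x)
    exact hboth.mono fun t ht x hx => (ht x hx).1.trans (ht x hx).2.symm

end IsCompApprox

theorem Obeys.mono {c d : ℕ → ℕ → ℚ} {L : ℕ → Bool} (hcd : ∀ x s, c x s ≤ d x s)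
    (h : Obeys d L) : Obeys c L :=
  let ⟨A, hA, q, hq⟩ := h
  ⟨A, hA, q, hq.mono hcd⟩

theorem Obeys.add {c d : ℕ → ℕ → ℚ} (hc : MonotonicCF c) (hd : MonotonicCF d)
    (hc0 : ∀ x s, 0 ≤ c x s) (hd0 : ∀ x s, 0 ≤ d x s) {L : ℕ → Bool}
    (hcL : Obeys c L) (hdL : Obeys d L) : Obeys (fun x s => c x s + d x s) L := by
  obtain ⟨A, hA, q, hq⟩ := hcL
  obtain ⟨B, hB, r, hr⟩ := hdL
  obtain ⟨s, hs, hs_mono, hagree⟩ := hA.exists_computable_strictMono_agree hB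
  refine ⟨fun i => A (s i), hA.comp_strictMono hs hs_mono, q + r,
    (hq.comp_strictMono hc hc0 hs_mono).add ?_⟩
  exact (hr.comp_strictMono hd hd0 hs_mono).congr fun i x hx => (hagree i x hx).symm

theorem stmt11_general (c d : ℕ → ℕ → ℚ) (hc : IsCostFunction c) (hd : IsCostFunction d)
    (hmc : MonotonicCF c) (hmd : MonotonicCF d) (A : ℕ → Bool) :
    (Obeys c A ∧ Obeys d A) ↔ Obeys (fun x s => c x s + d x s) A :=
  ⟨fun ⟨hcA, hdA⟩ => hcA.add hmc hmd hc.2 hd.2 hdA,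
    fun h => ⟨h.mono fun x s => le_add_of_nonneg_right (hd.2 x s),
      h.mono fun x s => le_add_of_nonneg_left (hc.2 x s)⟩⟩

/-- For monotonic cost functions `c, d`, a Δ⁰₂ set obeys both
`c` and `d` iff it obeys `c + d`. -/
theorem stmt11 (c d : ℕ → ℕ → ℚ) (hc : IsCostFunction c) (hd : IsCostFunction d)
    (hmc : MonotonicCF c) (hmd : MonotonicCF d) (A : ℕ → Bool)
    (hA : ∃ app, IsCompApprox app A) :
    (Obeys c A ∧ Obeys d A) ↔ Obeys (fun x s => c x s + d x s) A :=
  stmt11_general c d hc hd hmc hmd A
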